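/- arXiv:2206.05660 — 2 statements merged into one kernel-verified Lean document; each statement's English description precedes it below -/
import Mathlib

section
/- Let a₁ < a₂ < ... < a_l be positive integers with gcd 1, and let p ≥ 0. With m_j^{(p)} the least positive integer congruent to j mod a₁ having at least p+1 representations, the p-Sylvester number satisfies n_p(a₁,...,a_l) = (1/a₁)·Σ_{j=0}^{a₁−1} m_j^{(p)} − (a₁−1)/2. -/
/-- Number of representations of `n` as a nonnegative integer combination of `a 0, ..., a l`. -/
noncomputable def repCountL (l : ℕ) (a : Fin (l + 1) → ℕ) (n : ℤ) : ℕ :=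
  Nat.card {x : Fin (l + 1) → ℕ // (∑ i, (x i : ℤ) * a i) = n}

lemma repFinite (l : ℕ) (a : Fin (l + 1) → ℕ) (ha : ∀ i, 0 < a i) (n : ℤ) :
    ({x : Fin (l + 1) → ℕ | (∑ i, (x i : ℤ) * a i) = n}).Finite := by
  apply Set.Finite.subset (Set.Finite.pi (fun i : Fin (l+1) => Set.finite_Iic n.toNat))
  intro x hx
  simp only [Set.mem_pi, Set.mem_univ, Set.mem_Iic, forall_true_left]
  intro i
  have h1 : (x i : ℤ) ≤ ∑ i, (x i : ℤ) * a i := by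
    calc (x i : ℤ) ≤ (x i : ℤ) * a i :=
          le_mul_of_one_le_right (by positivity) (by exact_mod_cast ha i)
      _ ≤ _ := Finset.single_le_sum (f := fun i => (x i : ℤ) * a i)
          (fun i _ => by positivity) (Finset.mem_univ i)
  have h2 : (x i : ℤ) ≤ n := le_of_le_of_eq h1 hx
  omega

lemma repMono (l : ℕ) (a : Fin (l + 1) → ℕ) (ha : ∀ i, 0 < a i) (n : ℤ) :
    repCountL l a n ≤ repCountL l a (n + a 0) := by
  have hfin : Finite {x : Fin (l + 1) → ℕ // (∑ i, (x i : ℤ) * a i) = n + a 0} :=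
    (repFinite l a ha (n + a 0)).to_subtype
  have key : ∀ x : Fin (l + 1) → ℕ,
      (∑ i, (((x + Pi.single 0 1 : Fin (l + 1) → ℕ) i : ℕ) : ℤ) * a i)
      = (∑ i, (x i : ℤ) * a i) + a 0 := by
    intro x
    simp only [Pi.add_apply, Nat.cast_add, add_mul, Finset.sum_add_distrib]
    congr 1
    simp [Pi.single_apply, Finset.sum_ite_eq']
  apply Nat.card_le_card_of_injective
    (fun x => ⟨x.1 + Pi.single 0 1, by rw [key]; exact congrArg (· + (a 0 : ℤ)) x.2⟩)
  intro x y hxy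
  have h := congrArg Subtype.val hxy
  simp only at h
  exact Subtype.ext (add_left_injective _ h)

lemma repMonoMul (l : ℕ) (a : Fin (l + 1) → ℕ) (ha : ∀ i, 0 < a i) (n : ℤ) (t : ℕ) :
    repCountL l a n ≤ repCountL l a (n + a 0 * t) := by
  induction t with
  | zero => simp
  | succ t ih =>
    refine ih.trans ?_
    have h := repMono l a ha (n + a 0 * t)
    have he : n + (a 0 : ℤ) * t + a 0 = n + a 0 * (t + 1 : ℕ) := by push_cast; ring
    rwa [he] at h

theorem stmt2 (l : ℕ) (a : Fin (l + 1) → ℕ) (ha : ∀ i, 0 < a i) (hmono : StrictMono a)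
    (hgcd : Finset.univ.gcd a = 1) (p : ℕ) (m : Fin (a 0) → ℕ)
    (hm : ∀ j : Fin (a 0), IsLeast
      {x : ℕ | x % a 0 = (j : ℕ) ∧ p + 1 ≤ repCountL l a (x : ℤ)} (m j)) :
    (Nat.card {n : ℕ | repCountL l a (n : ℤ) ≤ p} : ℚ) =
      (∑ j, (m j : ℚ)) / a 0 - ((a 0 : ℚ) - 1) / 2 := by
  have ha0 : 0 < a 0 := ha 0
  have hmk : ∀ j : Fin (a 0), m j = a 0 * (m j / a 0) + (j : ℕ) := by
    intro j
    have h1 : m j % a 0 = (j : ℕ) := (hm j).1.1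
    have h2 := Nat.div_add_mod (m j) (a 0)
    omega
  -- key characterization
  have key : ∀ n : ℕ, repCountL l a (n : ℤ) ≤ p ↔ n < m ⟨n % a 0, Nat.mod_lt n ha0⟩ := by
    intro n
    constructor
    · intro h
      by_contra hlt
      push_neg at hlt
      have h1 : m ⟨n % a 0, Nat.mod_lt n ha0⟩ % a 0 = n % a 0 :=
        (hm ⟨n % a 0, Nat.mod_lt n ha0⟩).1.1
      have hdvd : a 0 ∣ n - m ⟨n % a 0, Nat.mod_lt n ha0⟩ :=
        (Nat.modEq_iff_dvd' hlt).mp h1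
      obtain ⟨t, ht⟩ := hdvd
      have h3 : p + 1 ≤ repCountL l a ((m ⟨n % a 0, Nat.mod_lt n ha0⟩ : ℤ) + a 0 * t) :=
        le_trans (hm ⟨n % a 0, Nat.mod_lt n ha0⟩).1.2 (repMonoMul l a ha _ t)
      have he : ((m ⟨n % a 0, Nat.mod_lt n ha0⟩ : ℤ) + a 0 * t) = (n : ℤ) := by
        have h4 : m ⟨n % a 0, Nat.mod_lt n ha0⟩ + a 0 * t = n := by omega
        calc (m ⟨n % a 0, Nat.mod_lt n ha0⟩ : ℤ) + a 0 * t
            = ((m ⟨n % a 0, Nat.mod_lt n ha0⟩ + a 0 * t : ℕ) : ℤ) := by push_cast; ring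
          _ = (n : ℤ) := by exact_mod_cast congrArg (Nat.cast (R := ℤ)) h4
      rw [he] at h3
      omega
    · intro h
      by_contra hc
      push_neg at hc
      have := (hm ⟨n % a 0, Nat.mod_lt n ha0⟩).2 ⟨rfl, hc⟩
      omega
  -- cardinality via equiv with sigma type
  have hcard : Nat.card {n : ℕ | repCountL l a (n : ℤ) ≤ p} = ∑ j, m j / a 0 := by
    have hfb : Function.Bijective (fun x : Σ j : Fin (a 0), Fin (m j / a 0) =>
        (⟨a 0 * (x.2 : ℕ) + (x.1 : ℕ), by
          have hmod : (a 0 * (x.2 : ℕ) + (x.1 : ℕ)) % a 0 = (x.1 : ℕ) := by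
            simp [Nat.mul_add_mod, Nat.mod_eq_of_lt x.1.2]
          rw [Set.mem_setOf_eq, key]
          have hj : (⟨(a 0 * (x.2 : ℕ) + (x.1 : ℕ)) % a 0, Nat.mod_lt _ ha0⟩ : Fin (a 0))
              = x.1 := Fin.ext hmod
          rw [hj]
          have h5 : m x.1 = a 0 * (m x.1 / a 0) + (x.1 : ℕ) := hmk x.1
          have h6 : (x.2 : ℕ) < m x.1 / a 0 := x.2.2
          have h7 : a 0 * (x.2 : ℕ) < a 0 * (m x.1 / a 0) := (mul_lt_mul_iff_right₀ ha0).mpr h6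
          omega⟩ : {n : ℕ | repCountL l a (n : ℤ) ≤ p})) := by
      constructor
      · rintro ⟨j, i⟩ ⟨j', i'⟩ h
        have hv : a 0 * (i : ℕ) + (j : ℕ) = a 0 * (i' : ℕ) + (j' : ℕ) :=
          congrArg Subtype.val h
        have hj : (j : ℕ) = (j' : ℕ) := by
          have h8 := congrArg (· % a 0) hv
          simpa [Nat.mul_add_mod, Nat.mod_eq_of_lt j.2, Nat.mod_eq_of_lt j'.2] using h8
        have hji : j = j' := Fin.ext hj
        subst hji
        refine congrArg (Sigma.mk j) (Fin.ext (Nat.eq_of_mul_eq_mul_left ha0 ?_))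
        omega
      · rintro ⟨n, hn⟩
        refine ⟨⟨⟨n % a 0, Nat.mod_lt _ ha0⟩, ⟨n / a 0, ?_⟩⟩, ?_⟩
        · have h1 := (key n).1 hn
          have h2 : m ⟨n % a 0, Nat.mod_lt _ ha0⟩
              = a 0 * (m ⟨n % a 0, Nat.mod_lt _ ha0⟩ / a 0) + n % a 0 :=
            hmk ⟨n % a 0, Nat.mod_lt _ ha0⟩
          have h3 := Nat.div_add_mod n (a 0)
          have h9 : a 0 * (n / a 0)
              < a 0 * (m ⟨n % a 0, Nat.mod_lt _ ha0⟩ / a 0) := by omega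
          exact Nat.lt_of_mul_lt_mul_left h9
        · exact Subtype.ext (Nat.div_add_mod n (a 0))
    rw [Nat.card_congr (Equiv.ofBijective _ hfb).symm, Nat.card_eq_fintype_card]
    simp
  rw [hcard]
  -- final arithmetic
  have ha0Q : (0 : ℚ) < a 0 := by exact_mod_cast ha0
  have hsum : (∑ j, (m j : ℚ)) = a 0 * (∑ j, ((m j / a 0 : ℕ) : ℚ)) + a 0 * ((a 0 : ℚ) - 1) / 2 := by
    have h1 : ∀ j : Fin (a 0), (m j : ℚ) = a 0 * ((m j / a 0 : ℕ) : ℚ) + ((j : ℕ) : ℚ) := by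
      intro j
      rw [show ((m j : ℕ) : ℚ) = (((a 0 * (m j / a 0) + (j : ℕ) : ℕ)) : ℚ) from by rw [← hmk j]]
      push_cast; ring
    rw [Finset.sum_congr rfl (fun j _ => h1 j), Finset.sum_add_distrib, ← Finset.mul_sum]
    congr 1
    have h2 : (∑ j : Fin (a 0), ((j : ℕ) : ℚ)) = ∑ i ∈ Finset.range (a 0), (i : ℚ) :=
      Fin.sum_univ_eq_sum_range (fun i => (i : ℚ)) (a 0)
    have h3 : ((∑ i ∈ Finset.range (a 0), i : ℕ) : ℚ) * 2 = (a 0 : ℚ) * ((a 0 : ℚ) - 1) := by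
      have h4 := Finset.sum_range_id_mul_two (a 0)
      have h5 : ((∑ i ∈ Finset.range (a 0), i : ℕ) : ℚ) * 2 = ((a 0 * (a 0 - 1) : ℕ) : ℚ) := by
        exact_mod_cast congrArg (fun x : ℕ => (x : ℚ)) h4
      rw [h5, Nat.cast_mul]
      congr 1
      have h6 : 1 ≤ a 0 := ha0
      push_cast [h6]
      ring
    rw [h2]
    rw [Nat.cast_sum] at h3
    linarith
  rw [hsum]
  push_cast
  field_simp
  ring
end

section
/- For every integer i ≥ 3, the 1-Frobenius number of (F_i, F_{i+2}, F_{2i}) equals (F_i − 1)·F_{i+2} + F_{2i} − F_i. -/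
/-- Number of representations of `n` as a nonnegative integer combination of `a`, `b`, `c`. -/
noncomputable def repCount (a b c : ℕ) (n : ℤ) : ℕ :=
  Nat.card {v : ℕ × ℕ × ℕ // (v.1 : ℤ) * a + v.2.1 * b + v.2.2 * c = n}

/-- `g` is the `p`-Frobenius number of `a, b, c`: the largest integer with at most `p`
representations. -/
def IsPFrob (p a b c : ℕ) (g : ℤ) : Prop :=
  IsGreatest {n : ℤ | repCount a b c n ≤ p} g

/-- Lucas numbers. -/
def lucas : ℕ → ℕ
  | 0 => 2
  | 1 => 1
  | n + 2 => lucas n + lucas (n + 1)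

lemma lucas_add_fib (n : ℕ) : lucas n + Nat.fib n = 2 * Nat.fib (n + 1) := by
  induction n using Nat.twoStepInduction with
  | zero => simp [lucas]
  | one => simp [lucas]
  | more n ih1 ih2 =>
    have h1 : Nat.fib (n + 2) = Nat.fib n + Nat.fib (n + 1) := Nat.fib_add_two
    have h2 : Nat.fib (n + 3) = Nat.fib (n + 1) + Nat.fib (n + 2) := Nat.fib_add_two
    have e1 : n + 1 + 1 = n + 2 := by omega
    have e2 : n + 1 + 2 = n + 3 := by omega
    have e3 : n + 2 + 1 = n + 3 := by omega
    simp only [lucas, e1, e2, e3] at *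
    omega

lemma fib_two_mul_eq (i : ℕ) : Nat.fib (2 * i) = lucas i * Nat.fib i := by
  have h := Nat.fib_two_mul i
  have h2 := lucas_add_fib i
  have h3 : Nat.fib i ≤ Nat.fib (i + 1) := Nat.fib_le_fib_succ
  have h4 : 2 * Nat.fib (i + 1) - Nat.fib i = lucas i := by omega
  rw [h, h4, Nat.mul_comm]

/-- the solution type is finite when `a,b,c` are positive -/
lemma sols_finite (a b c : ℕ) (ha : 0 < a) (hb : 0 < b) (hc : 0 < c) (n : ℤ) :
    Finite {v : ℕ × ℕ × ℕ // (v.1 : ℤ) * a + v.2.1 * b + v.2.2 * c = n} := by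
  have haZ : (1:ℤ) ≤ a := by exact_mod_cast ha
  have hbZ : (1:ℤ) ≤ b := by exact_mod_cast hb
  have hcZ : (1:ℤ) ≤ c := by exact_mod_cast hc
  set S : Set (ℕ × ℕ × ℕ) := {v | (v.1 : ℤ) * a + v.2.1 * b + v.2.2 * c = n} with hS
  have hsub : S ⊆ Set.Iic ((n.toNat, n.toNat, n.toNat)) := by
    rintro ⟨x, y, z⟩ hv
    simp only [hS, Set.mem_setOf_eq] at hv
    have hx0 : (0:ℤ) ≤ x := Int.natCast_nonneg x
    have hy0 : (0:ℤ) ≤ y := Int.natCast_nonneg y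
    have hz0 : (0:ℤ) ≤ z := Int.natCast_nonneg z
    have e1 : (x:ℤ) ≤ (x:ℤ) * a := le_mul_of_one_le_right hx0 haZ
    have e2 : (y:ℤ) ≤ (y:ℤ) * b := le_mul_of_one_le_right hy0 hbZ
    have e3 : (z:ℤ) ≤ (z:ℤ) * c := le_mul_of_one_le_right hz0 hcZ
    have p1 : (0:ℤ) ≤ (x:ℤ) * a := by positivity
    have p2 : (0:ℤ) ≤ (y:ℤ) * b := by positivity
    have p3 : (0:ℤ) ≤ (z:ℤ) * c := by positivity
    have hx : (x:ℤ) ≤ n := by linarith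
    have hy : (y:ℤ) ≤ n := by linarith
    have hz : (z:ℤ) ≤ n := by linarith
    simp only [Set.mem_Iic, Prod.mk_le_mk]
    omega
  exact Set.Finite.to_subtype ((Set.finite_Iic _).subset hsub)

lemma key (a b L : ℕ) (ha : 0 < a) (hL : 0 < L) (hLb : L ≤ b) (hbLa : b ≤ L * a)
    (hco : Nat.Coprime a b) :
    IsPFrob 1 a b (L * a) (((a : ℤ) - 1) * b + (L * a : ℕ) - a) := by
  have hb : 0 < b := hL.trans_le hLb
  have haZ : (0:ℤ) < a := by exact_mod_cast ha
  have hbZ : (0:ℤ) < b := by exact_mod_cast hb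
  have hLZ : (0:ℤ) < L := by exact_mod_cast hL
  have hLbZ : (L:ℤ) ≤ b := by exact_mod_cast hLb
  have hbLaZ : (b:ℤ) ≤ (L:ℤ) * a := by exact_mod_cast hbLa
  set g : ℤ := ((a : ℤ) - 1) * b + (L * a : ℕ) - a with hg
  have hgval : g = ((L:ℤ) - 1) * a + ((a:ℤ) - 1) * b := by
    rw [hg]; push_cast; ring
  -- coprimality over ℤ
  have hcoZ : IsCoprime (b : ℤ) (a : ℤ) := by
    rw [Int.isCoprime_iff_gcd_eq_one, Int.gcd_natCast_natCast]
    exact Nat.coprime_comm.mp hco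
  -- uniqueness of representation of g
  have huniq : ∀ x y z : ℕ, (x : ℤ) * a + y * b + z * (L * a : ℕ) = g →
      (x : ℤ) = L - 1 ∧ (y : ℤ) = a - 1 ∧ z = 0 := by
    intro x y z h
    rw [hgval] at h
    push_cast at h
    have hx0 : (0:ℤ) ≤ x := Int.natCast_nonneg x
    have hz0' : (0:ℤ) ≤ z := Int.natCast_nonneg z
    have hy0' : (0:ℤ) ≤ y := Int.natCast_nonneg y
    set X : ℤ := (x : ℤ) + L * z with hX
    have hXnn : (0:ℤ) ≤ X := by positivity
    have hXa : X * a + (y:ℤ) * b = ((L:ℤ) - 1) * a + ((a:ℤ) - 1) * b := by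
      rw [hX]; linarith [h]
    have heq : (X - ((L:ℤ) - 1)) * a = (((a:ℤ) - 1) - y) * b := by linarith [hXa]
    have hdvd : (b : ℤ) ∣ (X - ((L:ℤ) - 1)) * a := ⟨((a:ℤ) - 1) - y, by linarith [heq]⟩
    obtain ⟨k, hk⟩ := hcoZ.dvd_of_dvd_mul_right hdvd
    have hcancel : ((a:ℤ) - 1) - y = k * a := by
      have h1 : (b:ℤ) * (k * a) = (b:ℤ) * (((a:ℤ) - 1) - y) := by
        have h2 : (b:ℤ) * (k * a) = (X - ((L:ℤ) - 1)) * a := by rw [hk]; ring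
        rw [h2, heq]; ring
      have h3 := mul_left_cancel₀ (ne_of_gt hbZ) h1
      linarith
    have hk0 : k = 0 := by
      rcases lt_trichotomy k 0 with hlt | he | hgt
      · exfalso
        have h2 : (b:ℤ) * k ≤ (b:ℤ) * (-1) := by
          apply mul_le_mul_of_nonneg_left (by omega) (le_of_lt hbZ)
        have h3 : X ≤ (L:ℤ) - 1 - b := by linarith [hk]
        linarith
      · exact he
      · exfalso
        have h2 : (a:ℤ) ≤ k * a := le_mul_of_one_le_left (le_of_lt haZ) (by omega)
        linarith [hcancel]
    have hXval : X = (L:ℤ) - 1 := by rw [hk0, mul_zero] at hk; linarith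
    have hyval : (y : ℤ) = (a:ℤ) - 1 := by
      have h1 : (((a:ℤ) - 1) - y) * b = 0 := by rw [← heq, hXval]; ring
      rcases mul_eq_zero.mp h1 with h2 | h2
      · linarith
      · exact absurd h2 (ne_of_gt hbZ)
    have hz0 : z = 0 := by
      by_contra hz
      have hz1 : (1:ℤ) ≤ z := by exact_mod_cast Nat.one_le_iff_ne_zero.mpr hz
      have h2 : (L:ℤ) ≤ (L:ℤ) * z := le_mul_of_one_le_right (le_of_lt hLZ) hz1
      rw [hX] at hXval
      linarith
    refine ⟨?_, hyval, hz0⟩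
    rw [hX, hz0] at hXval; push_cast at hXval; linarith
  constructor
  · -- g has exactly one representation: card ≤ 1 via subsingleton
    show repCount a b (L * a) g ≤ 1
    haveI hsub : Subsingleton
        {v : ℕ × ℕ × ℕ // (v.1 : ℤ) * a + v.2.1 * b + v.2.2 * (L * a : ℕ) = g} := by
      constructor
      rintro ⟨⟨x1, y1, z1⟩, h1⟩ ⟨⟨x2, y2, z2⟩, h2⟩
      obtain ⟨hx1, hy1, hz1⟩ := huniq x1 y1 z1 h1
      obtain ⟨hx2, hy2, hz2⟩ := huniq x2 y2 z2 h2
      have e1 : x1 = x2 := by exact_mod_cast hx1.trans hx2.symm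
      have e2 : y1 = y2 := by exact_mod_cast hy1.trans hy2.symm
      apply Subtype.ext
      show (x1, y1, z1) = (x2, y2, z2)
      rw [e1, e2, hz1, hz2]
    haveI : Finite {v : ℕ × ℕ × ℕ // (v.1 : ℤ) * a + v.2.1 * b + v.2.2 * (L * a : ℕ) = g} :=
      Finite.of_subsingleton
    exact Finite.card_le_one_iff_subsingleton.mpr hsub
  · -- upper bound
    rintro n hn
    by_contra hgn
    push_neg at hgn
    simp only [Set.mem_setOf_eq] at hn
    obtain ⟨u, v, huv⟩ := hcoZ.symm
    set X0 : ℤ := (n * u) % b with hX0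
    have hX0nn : 0 ≤ X0 := Int.emod_nonneg _ (ne_of_gt hbZ)
    have hX0lt : X0 < b := Int.emod_lt_of_pos _ hbZ
    have hdvd : (b:ℤ) ∣ n - X0 * a := by
      have h1 : (b:ℤ) ∣ n * u - X0 := Int.dvd_self_sub_of_emod_eq rfl
      have h2 : (b:ℤ) ∣ 1 - u * a := ⟨v, by linarith⟩
      have h3 : n - X0 * a = (n * u - X0) * a + n * (1 - u * a) := by ring
      rw [h3]
      exact dvd_add (h1.mul_right a) (h2.mul_left n)
    obtain ⟨y0, hy0⟩ := hdvd
    have hrepn : X0 * a + (b:ℤ) * y0 = n := by linarith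
    have hgn' : ((L:ℤ) - 1) * a + ((a:ℤ) - 1) * b < n := by rw [← hgval]; exact hgn
    have hX0a : X0 * a ≤ ((b:ℤ) - 1) * a :=
      mul_le_mul_of_nonneg_right (by linarith) (le_of_lt haZ)
    have hy0nn : 0 ≤ y0 := by
      by_contra hneg
      push_neg at hneg
      have h1 : (b:ℤ) * y0 ≤ (b:ℤ) * (-1) :=
        mul_le_mul_of_nonneg_left (by omega) (le_of_lt hbZ)
      nlinarith
    have hnt : Nontrivial
        {v : ℕ × ℕ × ℕ // (v.1 : ℤ) * a + v.2.1 * b + v.2.2 * (L * a : ℕ) = n} := by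
      have hcast : ((L * a : ℕ) : ℤ) = (L:ℤ) * a := by push_cast; ring
      rcases le_or_gt (L : ℤ) X0 with hcase | hcase
      · refine ⟨⟨⟨X0.toNat, y0.toNat, 0⟩, ?_⟩, ⟨⟨(X0 - L).toNat, y0.toNat, 1⟩, ?_⟩, ?_⟩
        · simp only [hcast]
          push_cast [Int.toNat_of_nonneg hX0nn, Int.toNat_of_nonneg hy0nn]
          linarith
        · simp only [hcast]
          push_cast [Int.toNat_of_nonneg (by linarith : (0:ℤ) ≤ X0 - L),
            Int.toNat_of_nonneg hy0nn]
          linarith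
        · simp only [ne_eq, Subtype.mk.injEq, Prod.mk.injEq]
          intro hcon
          exact absurd hcon.2.2 (by omega)
      · have hX0La : X0 * a ≤ ((L:ℤ) - 1) * a :=
          mul_le_mul_of_nonneg_right (by omega) (le_of_lt haZ)
        have hy0a : (a:ℤ) ≤ y0 := by
          by_contra hneg
          push_neg at hneg
          have h1 : (b:ℤ) * y0 ≤ (b:ℤ) * ((a:ℤ) - 1) :=
            mul_le_mul_of_nonneg_left (by omega) (le_of_lt hbZ)
          nlinarith
        refine ⟨⟨⟨X0.toNat, y0.toNat, 0⟩, ?_⟩,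
          ⟨⟨(X0 + b - L).toNat, (y0 - a).toNat, 1⟩, ?_⟩, ?_⟩
        · simp only [hcast]
          push_cast [Int.toNat_of_nonneg hX0nn, Int.toNat_of_nonneg hy0nn]
          linarith
        · simp only [hcast]
          push_cast [Int.toNat_of_nonneg (by linarith : (0:ℤ) ≤ X0 + b - L),
            Int.toNat_of_nonneg (by linarith : (0:ℤ) ≤ y0 - a)]
          linarith
        · simp only [ne_eq, Subtype.mk.injEq, Prod.mk.injEq]
          intro hcon
          exact absurd hcon.2.2 (by omega)
    haveI hfin : Finite {v : ℕ × ℕ × ℕ // (v.1 : ℤ) * a + v.2.1 * b + v.2.2 * (L * a : ℕ) = n} :=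
      sols_finite a b (L * a) ha hb (Nat.mul_pos hL ha) n
    have hlt : 1 < repCount a b (L * a) n := Finite.one_lt_card_iff_nontrivial.mpr hnt
    omega

theorem stmt6 (i : ℕ) (hi : 3 ≤ i) :
    letI F := Nat.fib
    IsPFrob 1 (F i) (F (i + 2)) (F (2 * i))
      (((F i : ℤ) - 1) * F (i + 2) + F (2 * i) - F i) := by
  show IsPFrob 1 (Nat.fib i) (Nat.fib (i + 2)) (Nat.fib (2 * i))
    (((Nat.fib i : ℤ) - 1) * Nat.fib (i + 2) + Nat.fib (2 * i) - Nat.fib i)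
  have ha : 0 < Nat.fib i := Nat.fib_pos.mpr (by omega)
  have hfib2 : Nat.fib (2 * i) = lucas i * Nat.fib i := fib_two_mul_eq i
  set L := lucas i with hLdef
  have hfib_rec : Nat.fib (i + 2) = Nat.fib i + Nat.fib (i + 1) := by
    rw [Nat.fib_add_two]
  have hlf : L + Nat.fib i = 2 * Nat.fib (i + 1) := lucas_add_fib i
  have hmono : Nat.fib i ≤ Nat.fib (i + 1) := Nat.fib_le_fib_succ
  have hL : 0 < L := by
    have : 0 < Nat.fib (i + 1) := Nat.fib_pos.mpr (by omega)
    omega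
  -- fib (i+1) ≤ 2 * fib i for i ≥ 2
  have hfib_half : Nat.fib (i + 1) ≤ 2 * Nat.fib i := by
    obtain ⟨j, rfl⟩ : ∃ j, i = j + 2 := ⟨i - 2, by omega⟩
    have hfa : Nat.fib (j + 3) = Nat.fib (j + 1) + Nat.fib (j + 2) := Nat.fib_add_two
    have hfb : Nat.fib (j + 2) = Nat.fib j + Nat.fib (j + 1) := Nat.fib_add_two
    have hfc : Nat.fib j ≤ Nat.fib (j + 1) := Nat.fib_le_fib_succ
    show Nat.fib (j + 3) ≤ 2 * Nat.fib (j + 2)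
    omega
  have hLb : L ≤ Nat.fib (i + 2) := by omega
  have hbLa : Nat.fib (i + 2) ≤ L * Nat.fib i := by
    rw [← hfib2]
    exact Nat.fib_mono (by omega)
  have hco : Nat.Coprime (Nat.fib i) (Nat.fib (i + 2)) := by
    have h1 : Nat.gcd (Nat.fib i) (Nat.fib (i + 2)) = Nat.fib (Nat.gcd i (i + 2)) :=
      (Nat.fib_gcd i (i + 2)).symm
    have h2 : Nat.gcd i (i + 2) = Nat.gcd i 2 := by
      conv_lhs => rw [show i + 2 = 2 + i from by omega]
      exact Nat.gcd_add_self_right i 2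
    have h3 : Nat.gcd i 2 = 1 ∨ Nat.gcd i 2 = 2 := by
      have hd := Nat.le_of_dvd (by omega) (Nat.gcd_dvd_right i 2)
      have hp := Nat.gcd_pos_of_pos_right i (show 0 < 2 by omega)
      omega
    unfold Nat.Coprime
    rw [h1, h2]
    rcases h3 with h | h <;> simp [h]
  have := key (Nat.fib i) (Nat.fib (i + 2)) L ha hL hLb hbLa hco
  rw [hfib2]
  exact this
end
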